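/- Let ω ∈ {α₁,...,α_m, β}^ℤ and suppose there is i ∈ ℤ such that ω_i = β and Ĥ_{α,i+1−k}(ω) ≠ Ĥ_{α,i+1}(ω) for all k ≥ 1. Then liminf_{n→∞} (1/n) · #{i−n+1 ≤ j ≤ i : ω_j = β} ≥ 1/2. -/

import Mathlib

/-!
Write `S n` for the signed count `∑ asign` over the window `[i - n + 1, i]`, so that
`S n = Ĥ(i + 1) - Ĥ(i + 1 - n)`. Then `S 1 = -1` since `ω i = β`, `S` moves by `±1`, and the
hypothesis says `S n ≠ 0` for `n ≥ 1`; a walk with unit steps cannot cross `0` without hitting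
it, so `S n ≤ -1`. As `S n = n - 2 · #β's`, at least `(n + 1) / 2` letters of the window are `β`.
-/

/-- The alphabet `{α₁,…,α_m, β}` of `Σ_α`, realized as `Fin (m+1)`:
the symbols `i < m` are the left brackets `α_{i+1}` and `Fin.last m` is `β`. -/
abbrev AlphaLetter (m : ℕ) := Fin (m + 1)

/-- Sign of a symbol of `Σ_α`: `+1` on each `αᵢ` and `-1` on `β`. -/
def asign (m : ℕ) (c : AlphaLetter m) : ℤ := if (c : ℕ) < m then 1 else -1

/-- The height function `Ĥ_{α,i}(ω)`: the signed count of `α`'s minus `β`'s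
between positions `0` and `i`, with the paper's convention for negative `i`. -/
def Hhat (m : ℕ) (ω : ℤ → AlphaLetter m) (i : ℤ) : ℤ :=
  if 0 ≤ i then ∑ k ∈ Finset.range i.toNat, asign m (ω k)
  else -∑ k ∈ Finset.range (-i).toNat, asign m (ω (i + k))

open Filter Finset

lemma asign_eq_ite (m : ℕ) (c : AlphaLetter m) :
    asign m c = if c = Fin.last m then -1 else 1 := by
  have hc := c.isLt
  by_cases h : c = Fin.last m
  · simp [asign, h]
  · have hne : (c : ℕ) ≠ m := fun hcm => h (Fin.ext (by simp [hcm]))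
    rw [asign, if_pos (by omega), if_neg h]

lemma asign_le_one (m : ℕ) (c : AlphaLetter m) : asign m c ≤ 1 := by
  rw [asign]; split_ifs <;> simp

lemma Hhat_add_one (m : ℕ) (ω : ℤ → AlphaLetter m) (a : ℤ) :
    Hhat m ω (a + 1) = Hhat m ω a + asign m (ω a) := by
  rcases le_or_gt 0 a with ha | ha
  · rw [Hhat, Hhat, if_pos (by omega), if_pos ha, show (a + 1).toNat = a.toNat + 1 by omega,
      sum_range_succ, Int.toNat_of_nonneg ha]
  · obtain ha' | ha' := eq_or_lt_of_le (show a + 1 ≤ 0 by omega)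
    · obtain rfl : a = -1 := by omega
      simp [Hhat]
    · have hshift : ∀ k ∈ range (-(a + 1)).toNat,
          asign m (ω (a + ↑(k + 1))) = asign m (ω (a + 1 + ↑k)) := fun k _ => by
        push_cast; ring_nf
      rw [Hhat, Hhat, if_neg (by omega), if_neg (by omega),
        show (-a).toNat = (-(a + 1)).toNat + 1 by omega, sum_range_succ', sum_congr rfl hshift]
      simp only [Nat.cast_zero, add_zero]
      ring

lemma card_Icc_sub_add_one (i : ℤ) (n : ℕ) : #(Icc (i - n + 1) i) = n := by
  rw [Int.card_Icc]; omega

lemma sum_Icc_sub_succ_add_one {M : Type*} [AddCommMonoid M] (f : ℤ → M) (i : ℤ) (n : ℕ) :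
    ∑ j ∈ Icc (i - (n + 1 : ℕ) + 1) i, f j = f (i - n) + ∑ j ∈ Icc (i - n + 1) i, f j := by
  rw [Nat.cast_succ, show i - (n + 1) + 1 = i - n by ring,
    ← insert_Icc_add_one_left_eq_Icc (by omega), sum_insert (by simp)]

lemma sum_asign_Icc_eq_Hhat_sub (m : ℕ) (ω : ℤ → AlphaLetter m) (i : ℤ) (n : ℕ) :
    ∑ j ∈ Icc (i - n + 1) i, asign m (ω j) = Hhat m ω (i + 1) - Hhat m ω (i + 1 - n) := by
  induction n with
  | zero => simp
  | succ n ih =>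
    rw [sum_Icc_sub_succ_add_one, ih, Nat.cast_succ, show i + 1 - (n + 1) = i - n by ring,
      show i + 1 - n = i - n + 1 by ring, Hhat_add_one m ω (i - n)]
    ring

lemma sum_asign_eq_card_sub {ι : Type*} (m : ℕ) (ω : ι → AlphaLetter m) (s : Finset ι) :
    ∑ j ∈ s, asign m (ω j) = #s - 2 * #(s.filter (fun j => ω j = Fin.last m)) := by
  have hsplit := card_filter_add_card_filter_not (s := s) (p := fun j => ω j = Fin.last m)
  simp only [asign_eq_ite, sum_ite, sum_const, nsmul_eq_mul, mul_neg, mul_one]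
  linarith

lemma neg_of_le_add_one_of_ne_zero (f : ℕ → ℤ) (h0 : f 0 < 0)
    (hstep : ∀ k, f (k + 1) ≤ f k + 1) (hne : ∀ k, f k ≠ 0) (k : ℕ) : f k < 0 := by
  induction k with
  | zero => exact h0
  | succ k ih => have := hstep k; have := hne (k + 1); omega

lemma sum_asign_Icc_le_neg_one (m : ℕ) (ω : ℤ → AlphaLetter m) (i : ℤ)
    (hβ : ω i = Fin.last m) (hun : ∀ k : ℕ, 1 ≤ k → Hhat m ω (i + 1 - k) ≠ Hhat m ω (i + 1))
    (n : ℕ) (hn : 1 ≤ n) : ∑ j ∈ Icc (i - n + 1) i, asign m (ω j) ≤ -1 := by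
  obtain ⟨k, rfl⟩ := Nat.exists_eq_add_of_le' hn
  refine Int.le_sub_one_of_lt <| neg_of_le_add_one_of_ne_zero
    (fun k : ℕ => ∑ j ∈ Icc (i - (k + 1 : ℕ) + 1) i, asign m (ω j)) ?_ (fun k => ?_) (fun k => ?_) k
  · simp [hβ, asign_eq_ite]
  · rw [sum_Icc_sub_succ_add_one, add_comm]
    exact add_le_add_right (asign_le_one m _) _
  · rw [sum_asign_Icc_eq_Hhat_sub, sub_ne_zero]
    exact (hun (k + 1) (by omega)).symm

lemma card_filter_Icc_div_ge_half (m : ℕ) (ω : ℤ → AlphaLetter m) (i : ℤ)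
    (hβ : ω i = Fin.last m) (hun : ∀ k : ℕ, 1 ≤ k → Hhat m ω (i + 1 - k) ≠ Hhat m ω (i + 1))
    (n : ℕ) (hn : 1 ≤ n) :
    (1 / 2 : ℝ) ≤ (#((Icc (i - n + 1) i).filter (fun j => ω j = Fin.last m)) : ℝ) / n := by
  set B := #((Icc (i - n + 1) i).filter (fun j => ω j = Fin.last m))
  have hsum := sum_asign_Icc_le_neg_one m ω i hβ hun n hn
  rw [sum_asign_eq_card_sub, card_Icc_sub_add_one] at hsum
  have hB : (n : ℝ) + 1 ≤ 2 * B := by exact_mod_cast (by omega : (n : ℤ) + 1 ≤ 2 * B)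
  rw [le_div_iff₀ (by exact_mod_cast hn)]
  linarith

lemma card_filter_Icc_div_le_one {α : Type*} (p : α → Prop) [DecidablePred p] (ω : ℤ → α)
    (i : ℤ) (n : ℕ) : (#((Icc (i - n + 1) i).filter (fun j => p (ω j))) : ℝ) / n ≤ 1 := by
  apply div_le_one_of_le₀ _ n.cast_nonneg
  exact_mod_cast card_Icc_sub_add_one i n ▸ card_filter_le _ _

theorem unmatched_beta_density_general (m : ℕ) (ω : ℤ → AlphaLetter m)
    (i : ℤ) (hβ : ω i = Fin.last m)
    (hun : ∀ k : ℕ, 1 ≤ k → Hhat m ω (i + 1 - k) ≠ Hhat m ω (i + 1)) :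
    (1 / 2 : ℝ) ≤ atTop.liminf (fun n : ℕ =>
      (((Finset.Icc (i - n + 1) i).filter (fun j => ω j = Fin.last m)).card : ℝ) / n) :=
  le_liminf_of_le
    (isCoboundedUnder_ge_of_le atTop (card_filter_Icc_div_le_one (· = Fin.last m) ω i))
    ((eventually_ge_atTop 1).mono (card_filter_Icc_div_ge_half m ω i hβ hun))

/-- If the `β` at position `i` is never matched looking
backward, then in lower density at least half of the symbols in the windows
`[i-n+1, i]` are `β`. -/
theorem unmatched_beta_density (m : ℕ) (hm : 2 ≤ m) (ω : ℤ → AlphaLetter m)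
    (i : ℤ) (hβ : ω i = Fin.last m)
    (hun : ∀ k : ℕ, 1 ≤ k → Hhat m ω (i + 1 - k) ≠ Hhat m ω (i + 1)) :
    (1 / 2 : ℝ) ≤ atTop.liminf (fun n : ℕ =>
      (((Finset.Icc (i - n + 1) i).filter (fun j => ω j = Fin.last m)).card : ℝ) / n) :=
  unmatched_beta_density_general m ω i hβ hun
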